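/- The translation T from λσ-terms to suspension terms is a left inverse of the translation S from suspension terms to λσ-terms: for every well-formed suspension term t, T(S(t)) = t; moreover, for every well-formed suspension environment e and natural number j with j ≥ lev(e), E(R(e,j)) = (len(e), j, e). -/
import Mathlib


mutual
inductive STerm : Type
  | const : ℕ → STerm
  | var   : ℕ → STerm
  | app   : STerm → STerm → STerm
  | lam   : STerm → STerm
  | susp  : STerm → ℕ → ℕ → SEnv → STerm
inductive SEnv : Type
  | nil   : SEnv
  | cons  : STerm → ℕ → SEnv → SEnv
  | merge : SEnv → ℕ → ℕ → SEnv → SEnv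
end

/-- Length of an environment. -/
def SEnv.len : SEnv → ℕ
  | .nil => 0
  | .cons _ _ e => 1 + e.len
  | .merge e1 nl1 ol2 _ => e1.len + (ol2 - nl1)

/-- Level of an environment. -/
def SEnv.lev : SEnv → ℕ
  | .nil => 0
  | .cons _ n _ => n
  | .merge _ nl1 ol2 e2 => e2.lev + (nl1 - ol2)

mutual
/-- Well-formedness of suspension terms. -/
def STerm.wf : STerm → Prop
  | .const _ => True
  | .var _ => True
  | .app t1 t2 => t1.wf ∧ t2.wf
  | .lam t => t.wf
  | .susp t ol nl e => t.wf ∧ e.wf ∧ e.len = ol ∧ e.lev ≤ nl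
/-- Well-formedness of suspension environments. -/
def SEnv.wf : SEnv → Prop
  | .nil => True
  | .cons t n e => t.wf ∧ e.wf ∧ e.lev ≤ n
  | .merge e1 nl1 ol2 e2 => e1.wf ∧ e2.wf ∧ e2.len = ol2 ∧ e1.lev ≤ nl1
end

/-- A simple environment: no merged environments on the top spine. -/
def SEnv.simple : SEnv → Prop
  | .nil => True
  | .cons _ _ e => e.simple
  | .merge _ _ _ _ => False


mutual
/-- λσ-terms (extended with constants). -/
inductive LsgTm : Type
  | const : ℕ → LsgTm
  | one   : LsgTm                     -- the de Bruijn index 1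
  | app   : LsgTm → LsgTm → LsgTm
  | lam   : LsgTm → LsgTm
  | clos  : LsgTm → LsgSub → LsgTm    -- a[s]
/-- λσ-substitutions. -/
inductive LsgSub : Type
  | id    : LsgSub
  | shift : LsgSub                    -- ↑
  | cons  : LsgTm → LsgSub → LsgSub   -- a · s
  | comp  : LsgSub → LsgSub → LsgSub  -- s ∘ t
end

/-- `shifts s j` = (…((s ∘ ↑) ∘ ↑) ∘ … ∘ ↑) with j shifts, left-associated. -/
def shifts : LsgSub → ℕ → LsgSub
  | s, 0 => s
  | s, j + 1 => .comp (shifts s j) .shift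

/-- `upPow n` = ↑^(n+1), left-associated. -/
def upPow : ℕ → LsgSub
  | 0 => .shift
  | k + 1 => .comp (upPow k) .shift

mutual
/-- Translation S from suspension terms to λσ-terms.
Here `STerm.var n` denotes the de Bruijn index n+1 (so indices are positive). -/
def Ssg : STerm → LsgTm
  | .const c => .const c
  | .var 0 => .one
  | .var (n + 1) => .clos .one (upPow n)
  | .app a b => .app (Ssg a) (Ssg b)
  | .lam a => .lam (Ssg a)
  | .susp t _ nl e => .clos (Ssg t) (Rsg e nl)
/-- Translation R from a suspension environment and an embedding level
to a λσ-substitution. -/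
def Rsg : SEnv → ℕ → LsgSub
  | .nil, j => shifts .id j
  | .cons t n e, j => shifts (.cons (Ssg t) (Rsg e n)) (j - n)
  | .merge e1 nl1 ol2 e2, j => .comp (Rsg e1 nl1) (Rsg e2 (j - (nl1 - ol2)))
end

/-- Recognize pure shift powers: `shiftPow? s = some n` iff s = ↑^(n+1). -/
def shiftPow? : LsgSub → Option ℕ
  | .shift => some 0
  | .comp s .shift => (shiftPow? s).map (· + 1)
  | _ => none

mutual
/-- Translation T from λσ-terms to suspension terms
(with `STerm.var n` denoting the de Bruijn index n+1). -/
def Tsg : LsgTm → STerm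
  | .const c => .const c
  | .one => .var 0
  | .app a b => .app (Tsg a) (Tsg b)
  | .lam a => .lam (Tsg a)
  | .clos a s =>
      match a, shiftPow? s with
      | .one, some n => .var (n + 1)
      | _, _ => .susp (Tsg a) (Esg s).1 (Esg s).2.1 (Esg s).2.2
/-- Translation E from λσ-substitutions to (ol, nl, environment) triples;
for overlapping clauses the earlier one takes priority. -/
def Esg : LsgSub → ℕ × ℕ × SEnv
  | .id => (0, 0, .nil)
  | .shift => (0, 1, .nil)
  | .cons a s => ((Esg s).1 + 1, (Esg s).2.1, .cons (Tsg a) (Esg s).2.1 (Esg s).2.2)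
  | .comp s .shift => ((Esg s).1, (Esg s).2.1 + 1, (Esg s).2.2)
  | .comp s1 s2 =>
      ((Esg s1).1 + ((Esg s2).1 - (Esg s1).2.1),
       (Esg s2).2.1 + ((Esg s1).2.1 - (Esg s2).1),
       .merge (Esg s1).2.2 (Esg s1).2.1 (Esg s2).1 (Esg s2).2.2)
end

lemma shiftPow?_shifts (k : ℕ) (s : LsgSub) (h : shiftPow? s = none) :
    shiftPow? (shifts s k) = none := by
  induction k with
  | zero => simpa [shifts]
  | succ k ih => simp [shifts, shiftPow?, ih]

lemma shifts_ne_shift (k : ℕ) (s : LsgSub) (h : s ≠ .shift) :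
    shifts s k ≠ .shift := by
  cases k <;> simp [shifts, h]

mutual
lemma Rsg_ne_shift : ∀ (e : SEnv) (j : ℕ), Rsg e j ≠ .shift
  | .nil, j => by
      have := shifts_ne_shift j LsgSub.id (by simp)
      simpa [Rsg] using this
  | .cons t n e, j => by
      have := shifts_ne_shift (j - n) (.cons (Ssg t) (Rsg e n)) (by simp)
      simpa [Rsg] using this
  | .merge e1 nl1 ol2 e2, j => by simp [Rsg]
end

lemma shiftPow?_Rsg : ∀ (e : SEnv) (j : ℕ), shiftPow? (Rsg e j) = none
  | .nil, j => by
      have := shiftPow?_shifts j LsgSub.id (by simp [shiftPow?])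
      simpa [Rsg] using this
  | .cons t n e, j => by
      have := shiftPow?_shifts (j - n) (.cons (Ssg t) (Rsg e n))
        (by simp [shiftPow?])
      simpa [Rsg] using this
  | .merge e1 nl1 ol2 e2, j => by
      have h := Rsg_ne_shift e2 (j - (nl1 - ol2))
      simp only [Rsg]
      cases h2 : Rsg e2 (j - (nl1 - ol2)) <;> simp_all [shiftPow?]

lemma Esg_shifts (k : ℕ) (s : LsgSub) :
    Esg (shifts s k) = ((Esg s).1, (Esg s).2.1 + k, (Esg s).2.2) := by
  induction k with
  | zero => simp [shifts]
  | succ k ih => simp [shifts, Esg, ih]; ring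

lemma Esg_comp (s1 s2 : LsgSub) (h : s2 ≠ .shift) :
    Esg (.comp s1 s2) =
      ((Esg s1).1 + ((Esg s2).1 - (Esg s1).2.1),
       (Esg s2).2.1 + ((Esg s1).2.1 - (Esg s2).1),
       .merge (Esg s1).2.2 (Esg s1).2.1 (Esg s2).1 (Esg s2).2.2) := by
  cases s2 <;> simp_all [Esg]

lemma shiftPow?_upPow (n : ℕ) : shiftPow? (upPow n) = some n := by
  induction n with
  | zero => simp [upPow, shiftPow?]
  | succ n ih => simp [upPow, shiftPow?, ih]

lemma Tsg_clos_none (a : LsgTm) (s : LsgSub) (h : shiftPow? s = none) :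
    Tsg (.clos a s) = .susp (Tsg a) (Esg s).1 (Esg s).2.1 (Esg s).2.2 := by
  cases a <;> simp [Tsg, h]

mutual
theorem T_S : ∀ t : STerm, t.wf → Tsg (Ssg t) = t
  | .const c, _ => by simp [Ssg, Tsg]
  | .var 0, _ => by simp [Ssg, Tsg]
  | .var (n + 1), _ => by simp [Ssg, Tsg, shiftPow?_upPow n]
  | .app a b, h => by
      obtain ⟨h1, h2⟩ := h
      simp [Ssg, Tsg, T_S a h1, T_S b h2]
  | .lam a, h => by simp [Ssg, Tsg, T_S a h]
  | .susp t ol nl e, h => by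
      obtain ⟨ht, he, hlen, hlev⟩ := h
      rw [Ssg, Tsg_clos_none _ _ (shiftPow?_Rsg e nl), E_R e nl he hlev,
        T_S t ht, hlen]

theorem E_R : ∀ (e : SEnv) (j : ℕ), e.wf → e.lev ≤ j →
    Esg (Rsg e j) = (e.len, j, e)
  | .nil, j, _, _ => by
      simp [Rsg, Esg_shifts, Esg, SEnv.len]
  | .cons t n e, j, h, hj => by
      obtain ⟨ht, he, hlev⟩ := h
      have hn : n ≤ j := hj
      rw [Rsg, Esg_shifts]
      simp only [Esg, E_R e n he hlev, T_S t ht]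
      simp [SEnv.len, Nat.add_comm, Nat.add_sub_cancel' hn]
  | .merge e1 nl1 ol2 e2, j, h, hj => by
      obtain ⟨h1, h2, hlen, hlev⟩ := h
      have hle : e2.lev ≤ j - (nl1 - ol2) := by
        have : e2.lev + (nl1 - ol2) ≤ j := hj
        omega
      rw [Rsg, Esg_comp _ _ (Rsg_ne_shift _ _),
        E_R e1 nl1 h1 hlev, E_R e2 _ h2 hle]
      have : nl1 - ol2 ≤ j := by
        have : e2.lev + (nl1 - ol2) ≤ j := hj
        omega
      simp [SEnv.len, hlen]
      omega
end

/-- T is a left inverse of S; and E(R(e,j)) = (len(e), j, e)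
for well-formed e and j ≥ lev(e). -/
theorem stmt18 :
    (∀ t : STerm, t.wf → Tsg (Ssg t) = t) ∧
    (∀ (e : SEnv) (j : ℕ), e.wf → e.lev ≤ j → Esg (Rsg e j) = (e.len, j, e)) := by
  exact ⟨T_S, E_R⟩
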